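/- arXiv:2208.05795 — 3 statements merged into one kernel-verified Lean document; each statement's English description precedes it below -/
import Mathlib

section
/- (Fossorier cycle condition, forward direction for 4-cycles) Consider a QC parity-check matrix with blocks P^{a_{ij}}, circulant size L. The 2×2 sub-array formed by block rows i₁ ≠ i₂ and block columns j₁ ≠ j₂ contains a 4-cycle in its Tanner graph (i.e., there exist bit positions making the four corresponding entries all 1) if and only if a_{i₁j₁} − a_{i₁j₂} + a_{i₂j₂} − a_{i₂j₁} ≡ 0 (mod L). -/
/-- The L×L circulant permutation matrix over `ℕ`. -/
def cpm (L : ℕ) [NeZero L] : Matrix (ZMod L) (ZMod L) ℕ :=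
  Matrix.of fun i j => if i + 1 = j then 1 else 0

lemma cpm_pow (L : ℕ) [NeZero L] (n : ℕ) (i j : ZMod L) :
    (cpm L ^ n) i j = if i + (n : ZMod L) = j then 1 else 0 := by
  induction n generalizing i j with
  | zero => simp [Matrix.one_apply, eq_comm]
  | succ n ih =>
    rw [pow_succ, Matrix.mul_apply]
    simp only [ih]
    rw [Finset.sum_eq_single (i + (n : ZMod L))]
    · rw [if_pos rfl, one_mul]
      show (if i + (n : ZMod L) + 1 = j then 1 else 0) = _
      push_cast
      rw [add_assoc]
    · intro k _ hk
      rw [if_neg (fun h => hk h.symm), zero_mul]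
    · simp

lemma cpm_pow_eq_one (L : ℕ) [NeZero L] (n : ℕ) (i j : ZMod L) :
    (cpm L ^ n) i j = 1 ↔ i + (n : ZMod L) = j := by
  rw [cpm_pow]
  split <;> simp_all

/-- Fossorier's cycle condition for 4-cycles: the 2×2 block sub-array
`[[P^{a₁₁}, P^{a₁₂}], [P^{a₂₁}, P^{a₂₂}]]` contains a 4-cycle in its Tanner
graph iff `a₁₁ - a₁₂ + a₂₂ - a₂₁ ≡ 0 (mod L)`. -/
theorem fossorier_four_cycle (L : ℕ) [NeZero L]
    (a₁₁ a₁₂ a₂₁ a₂₂ : ZMod L) :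
    (∃ r₁ r₂ c₁ c₂ : ZMod L,
        (cpm L ^ a₁₁.val) r₁ c₁ = 1 ∧
        (cpm L ^ a₁₂.val) r₁ c₂ = 1 ∧
        (cpm L ^ a₂₂.val) r₂ c₂ = 1 ∧
        (cpm L ^ a₂₁.val) r₂ c₁ = 1) ↔
      a₁₁ - a₁₂ + a₂₂ - a₂₁ = 0 := by
  simp only [cpm_pow_eq_one, ZMod.natCast_val, ZMod.cast_id]
  constructor
  · rintro ⟨r₁, r₂, c₁, c₂, h1, h2, h3, h4⟩
    linear_combination h1 - h2 + h3 - h4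
  · intro h
    exact ⟨0, a₁₂ - a₂₂, a₁₁, a₁₂, by ring, by ring, by ring,
      by linear_combination -h⟩
end

section
/- For a QC parity-check matrix with all-nonzero blocks P^{a_{ij}} (exponent matrix a ∈ (ZMod L)^{m×n}), the Tanner graph is 4-cycle-free if and only if for all i₁ ≠ i₂ and j₁ ≠ j₂ the differences satisfy a_{i₁j₁} − a_{i₂j₁} ≠ a_{i₁j₂} − a_{i₂j₂} in ZMod L. -/
/-- The lifted matrix of a QC parity-check matrix whose blocks are all nonzero
CPMs `P^{a i j}`. -/
def qcLift {m n : ℕ} (L : ℕ) [NeZero L] (a : Fin m → Fin n → ZMod L) :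
    Matrix (Fin m × ZMod L) (Fin n × ZMod L) ℕ :=
  Matrix.of fun p q => if p.2 + a p.1 q.1 = q.2 then 1 else 0

lemma qcLift_eq_one_iff {m n : ℕ} (L : ℕ) [NeZero L] (a : Fin m → Fin n → ZMod L)
    (p : Fin m × ZMod L) (q : Fin n × ZMod L) :
    qcLift L a p q = 1 ↔ p.2 + a p.1 q.1 = q.2 := by
  simp [qcLift]

/-- For a QC parity-check matrix with all-nonzero CPM blocks, the Tanner graph
is 4-cycle free (no two columns of the lifted matrix share two common row
positions with 1s) iff for all block rows `i₁ ≠ i₂` and block columns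
`j₁ ≠ j₂`, `a i₁ j₁ - a i₂ j₁ ≠ a i₁ j₂ - a i₂ j₂` in `ZMod L`. -/
theorem qc_four_cycle_free_iff {m n : ℕ} (L : ℕ) [NeZero L]
    (a : Fin m → Fin n → ZMod L) :
    (∀ q₁ q₂ : Fin n × ZMod L, q₁ ≠ q₂ →
      ∀ p₁ p₂ : Fin m × ZMod L, p₁ ≠ p₂ →
        ¬(qcLift L a p₁ q₁ = 1 ∧ qcLift L a p₁ q₂ = 1 ∧
          qcLift L a p₂ q₁ = 1 ∧ qcLift L a p₂ q₂ = 1)) ↔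
      ∀ i₁ i₂ : Fin m, ∀ j₁ j₂ : Fin n, i₁ ≠ i₂ → j₁ ≠ j₂ →
        a i₁ j₁ - a i₂ j₁ ≠ a i₁ j₂ - a i₂ j₂ := by
  constructor
  · intro h i₁ i₂ j₁ j₂ hi hj heq
    refine h (j₁, a i₁ j₁) (j₂, a i₁ j₂) (by simp [Prod.ext_iff, hj])
      (i₁, 0) (i₂, a i₁ j₁ - a i₂ j₁) (by simp [Prod.ext_iff, hi]) ?_
    refine ⟨?_, ?_, ?_, ?_⟩ <;> rw [qcLift_eq_one_iff] <;> simp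
    all_goals linear_combination heq
  · rintro h ⟨j₁, y₁⟩ ⟨j₂, y₂⟩ hq ⟨i₁, x₁⟩ ⟨i₂, x₂⟩ hp ⟨h11, h12, h21, h22⟩
    rw [qcLift_eq_one_iff] at h11 h12 h21 h22
    simp only at h11 h12 h21 h22
    have hj : j₁ ≠ j₂ := by
      rintro rfl
      have hy : y₁ = y₂ := by rw [← h11, ← h12]
      exact hq (by simp [Prod.ext_iff, hy])
    have hi : i₁ ≠ i₂ := by
      rintro rfl
      have hx : x₁ = x₂ := by
        have : x₁ + a i₁ j₁ = x₂ + a i₁ j₁ := by rw [h11, h21]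
        exact add_right_cancel this
      exact hp (by simp [Prod.ext_iff, hx])
    exact h i₁ i₂ j₁ j₂ hi hj (by
      have e1 : a i₁ j₁ - a i₂ j₁ = x₂ - x₁ := by
        linear_combination h11 - h21
      have e2 : a i₁ j₂ - a i₂ j₂ = x₂ - x₁ := by
        linear_combination h12 - h22
      rw [e1, e2])
end

section
/- If the induced bipartite subgraph on a set S of variable nodes in a Tanner graph and its check-neighborhood is a forest, and every variable node in S has full degree d_v ≥ 2 in the graph, then, when the induced subgraph is a tree spanning S, the number of check nodes singly connected to S is at least |S|·(d_v − 2) + 2. -/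
open Finset

/-- The bipartite subgraph of a Tanner graph induced by a set `S` of variable
nodes together with its check-node neighborhood. -/
def inducedTanner {V C : Type*} (E : C → V → Prop) (S : Finset V) :
    SimpleGraph (V ⊕ C) where
  Adj x y :=
    match x, y with
    | Sum.inl v, Sum.inr c => v ∈ S ∧ E c v
    | Sum.inr c, Sum.inl v => v ∈ S ∧ E c v
    | _, _ => False
  symm := by constructor; intro x y h; cases x <;> cases y <;> simp_all
  loopless := by constructor; intro x h; cases x <;> simp_all

/-- If the subgraph induced by a finite set `S` of variable nodes (on `S`
together with its check neighborhood) is a tree, and every variable node of `S`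
has full degree `d_v ≥ 2` in the Tanner graph, then the number of check nodes
singly connected to `S` is at least `|S|·(d_v − 2) + 2`. -/
theorem tree_singly_connected_bound {V C : Type*} [Fintype V] [Fintype C]
    [DecidableEq V] [DecidableEq C]
    (E : C → V → Prop) [∀ c v, Decidable (E c v)] (dv : ℕ) (hdv : 2 ≤ dv)
    (S : Finset V)
    (hdeg : ∀ v ∈ S, (univ.filter (fun c : C => E c v)).card = dv)
    (htree : ((inducedTanner E S).induce
        {x : V ⊕ C | match x with
          | Sum.inl v => v ∈ S
          | Sum.inr c => ∃ v ∈ S, E c v}).IsTree) :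
    S.card * (dv - 2) + 2 ≤
      (univ.filter (fun c : C => (S.filter (fun v => E c v)).card = 1)).card := by
  classical
  set s : Set (V ⊕ C) := {x : V ⊕ C | match x with
          | Sum.inl v => v ∈ S
          | Sum.inr c => ∃ v ∈ S, E c v} with hs
  set G := (inducedTanner E S).induce s with hG
  set N : Finset C := univ.filter (fun c => ∃ v ∈ S, E c v) with hN
  set T : Finset C := univ.filter (fun c : C => (S.filter (fun v => E c v)).card = 1) with hT
  have hmeml : ∀ v : V, ((Sum.inl v : V ⊕ C) ∈ s) ↔ v ∈ S := fun v => Iff.rfl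
  have hmemr : ∀ c : C, ((Sum.inr c : V ⊕ C) ∈ s) ↔ ∃ v ∈ S, E c v := fun c => Iff.rfl
  -- S is nonempty
  have hSne : S.Nonempty := by
    obtain ⟨⟨x, hx⟩⟩ := htree.isConnected.nonempty
    cases x with
    | inl v => exact ⟨v, (hmeml v).1 hx⟩
    | inr c => obtain ⟨v, hv, -⟩ := (hmemr c).1 hx; exact ⟨v, hv⟩
  obtain ⟨v₀, hv₀⟩ := hSne
  have hCne : ∃ c : C, E c v₀ := by
    have := hdeg v₀ hv₀
    have hpos : 0 < (univ.filter (fun c : C => E c v₀)).card := by omega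
    obtain ⟨c, hc⟩ := Finset.card_pos.1 hpos
    exact ⟨c, (Finset.mem_filter.1 hc).2⟩
  obtain ⟨c₀, hc₀⟩ := hCne
  -- double counting
  have hsum : ∑ c : C, (S.filter (fun v => E c v)).card = S.card * dv := by
    have h1 : ∀ c : C, (S.filter (fun v => E c v)).card
        = ∑ v ∈ S, if E c v then 1 else 0 := fun c => by
      rw [Finset.card_filter]
    simp_rw [h1]
    rw [Finset.sum_comm]
    have h2 : ∀ v ∈ S, (∑ c : C, if E c v then 1 else 0) = dv := by
      intro v hv
      rw [← hdeg v hv, Finset.card_filter]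
    rw [Finset.sum_congr rfl h2, Finset.sum_const, smul_eq_mul]
  have hsumN : ∑ c ∈ N, (S.filter (fun v => E c v)).card = S.card * dv := by
    rw [← hsum]
    apply Finset.sum_subset (Finset.subset_univ N)
    intro c _ hcN
    rw [Finset.card_eq_zero, Finset.filter_eq_empty_iff]
    intro v hv hEv
    exact hcN (by simp [hN]; exact ⟨v, hv, hEv⟩)
  -- counting lower bound: 2 * N.card ≤ sum + T.card
  have hTN : T ⊆ N := by
    intro c hc
    rw [hT, Finset.mem_filter] at hc
    have : (S.filter (fun v => E c v)).Nonempty := by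
      rw [← Finset.card_pos, hc.2]; norm_num
    obtain ⟨v, hv⟩ := this
    rw [Finset.mem_filter] at hv
    simp [hN]
    exact ⟨v, hv.1, hv.2⟩
  have hbound : 2 * N.card ≤ S.card * dv + T.card := by
    have key : ∀ c ∈ N, 2 ≤ (S.filter (fun v => E c v)).card
        + (if (S.filter (fun v => E c v)).card = 1 then 1 else 0) := by
      intro c hc
      rw [hN, Finset.mem_filter] at hc
      obtain ⟨-, v, hv, hEv⟩ := hc
      have hpos : 0 < (S.filter (fun v => E c v)).card :=
        Finset.card_pos.2 ⟨v, Finset.mem_filter.2 ⟨hv, hEv⟩⟩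
      split <;> omega
    calc 2 * N.card = ∑ _c ∈ N, 2 := by rw [Finset.sum_const, smul_eq_mul, mul_comm]
    _ ≤ ∑ c ∈ N, ((S.filter (fun v => E c v)).card
        + (if (S.filter (fun v => E c v)).card = 1 then 1 else 0)) :=
      Finset.sum_le_sum key
    _ = S.card * dv + ∑ c ∈ N, (if (S.filter (fun v => E c v)).card = 1 then 1 else 0) := by
      rw [Finset.sum_add_distrib, hsumN]
    _ ≤ S.card * dv + T.card := by
      gcongr
      rw [← Finset.sum_filter, Finset.sum_const, smul_eq_mul, mul_one, hT]
      apply Finset.card_le_card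
      intro c hc
      rw [Finset.mem_filter] at hc ⊢
      exact ⟨Finset.mem_univ c, hc.2⟩
  -- the equivalence for card / sums
  let e : ↥s ≃ {v : V // v ∈ S} ⊕ {c : C // ∃ v ∈ S, E c v} :=
  { toFun := fun x => match x with
      | ⟨Sum.inl v, h⟩ => Sum.inl ⟨v, h⟩
      | ⟨Sum.inr c, h⟩ => Sum.inr ⟨c, h⟩
    invFun := Sum.elim (fun v => ⟨Sum.inl v.1, v.2⟩) (fun c => ⟨Sum.inr c.1, c.2⟩)
    left_inv := by rintro ⟨(v|c), h⟩ <;> rfl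
    right_inv := by rintro (v|c) <;> rfl }
  have hcardS : Fintype.card ↥s = S.card + N.card := by
    rw [Fintype.card_congr e, Fintype.card_sum, Fintype.card_coe, Fintype.card_subtype]
  -- degrees
  have hdegl : ∀ (v : V) (h : (Sum.inl v : V ⊕ C) ∈ s),
      G.degree ⟨Sum.inl v, h⟩ = dv := by
    intro v h
    have hv : v ∈ S := h
    rw [← hdeg v hv, ← SimpleGraph.card_neighborFinset_eq_degree]
    apply Finset.card_nbij' (fun y : ↥s => Sum.elim (fun _ => c₀) id y.1)
      (fun c => if hc : E c v then ⟨Sum.inr c, ⟨v, hv, hc⟩⟩ else ⟨Sum.inl v, h⟩)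
    · rintro ⟨(w|c), hc⟩ hy
      · exact absurd ((G.mem_neighborFinset _ _).1 hy) (by simp [hG, inducedTanner])
      · have : E c v := by
          have := (G.mem_neighborFinset _ _).1 hy
          simp [hG, inducedTanner, SimpleGraph.comap] at this
          exact this.2
        simpa using this
    · intro c hc
      simp only [Finset.coe_filter, Finset.mem_coe, Set.mem_setOf_eq, Finset.mem_filter] at hc
      dsimp only
      rw [dif_pos hc.2, Finset.mem_coe, G.mem_neighborFinset]
      exact ⟨hv, hc.2⟩
    · rintro ⟨(w|c), hc⟩ hy
      · exact absurd ((G.mem_neighborFinset _ _).1 hy) (by simp [hG, inducedTanner])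
      · have hEc : E c v := by
          have := (G.mem_neighborFinset _ _).1 hy
          simp [hG, inducedTanner, SimpleGraph.comap] at this
          exact this.2
        simp [hEc]
    · intro c hc
      simp only [Finset.coe_filter, Finset.mem_coe, Set.mem_setOf_eq, Finset.mem_filter] at hc
      dsimp only
      rw [dif_pos hc.2]
      rfl
  have hdegr : ∀ (c : C) (h : (Sum.inr c : V ⊕ C) ∈ s),
      G.degree ⟨Sum.inr c, h⟩ = (S.filter (fun v => E c v)).card := by
    intro c h
    rw [← SimpleGraph.card_neighborFinset_eq_degree]
    apply Finset.card_nbij' (fun y : ↥s => Sum.elim id (fun _ => v₀) y.1)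
      (fun v => if hv : v ∈ S ∧ E c v then ⟨Sum.inl v, hv.1⟩ else ⟨Sum.inr c, h⟩)
    · rintro ⟨(w|c'), hc⟩ hy
      · have := (G.mem_neighborFinset _ _).1 hy
        simp [hG, inducedTanner, SimpleGraph.comap] at this
        simpa using ⟨this.1, this.2⟩
      · exact absurd ((G.mem_neighborFinset _ _).1 hy) (by simp [hG, inducedTanner])
    · intro v hv
      simp only [Finset.coe_filter, Finset.mem_coe, Set.mem_setOf_eq, Finset.mem_filter] at hv
      dsimp only
      rw [dif_pos hv, Finset.mem_coe, G.mem_neighborFinset]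
      exact ⟨hv.1, hv.2⟩
    · rintro ⟨(w|c'), hc⟩ hy
      · have hw := (G.mem_neighborFinset _ _).1 hy
        simp [hG, inducedTanner, SimpleGraph.comap] at hw
        simp [hw.1, hw.2]
      · exact absurd ((G.mem_neighborFinset _ _).1 hy) (by simp [hG, inducedTanner])
    · intro v hv
      simp only [Finset.coe_filter, Finset.mem_coe, Set.mem_setOf_eq, Finset.mem_filter] at hv
      dsimp only
      rw [dif_pos hv]
      rfl
  -- handshake
  have hdegsum : ∑ x : ↥s, G.degree x = S.card * dv + S.card * dv := by
    rw [← Equiv.sum_comp e.symm (fun x => G.degree x), Fintype.sum_sum_type]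
    have h1 : ∑ v : {v : V // v ∈ S}, G.degree (e.symm (Sum.inl v)) = S.card * dv := by
      rw [Finset.sum_congr rfl (fun v _ => hdegl v.1 v.2), Finset.sum_const,
        Finset.card_univ, Fintype.card_coe, smul_eq_mul]
    have h2 : ∑ c : {c : C // ∃ v ∈ S, E c v},
        G.degree (e.symm (Sum.inr c)) = S.card * dv := by
      rw [Finset.sum_congr rfl (fun c _ => hdegr c.1 c.2), ← hsumN]
      exact (Finset.sum_subtype (p := fun c => ∃ v ∈ S, E c v) N
        (fun c => by simp [hN]) (fun c => (S.filter (fun v => E c v)).card)).symm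
    rw [h1, h2]
  have hedges : 2 * G.edgeFinset.card = 2 * (S.card * dv) := by
    rw [← SimpleGraph.sum_degrees_eq_twice_card_edges, hdegsum]; ring
  have htreecard := htree.card_edgeFinset
  have hfin : S.card * dv + 1 = S.card + N.card := by omega
  obtain ⟨k, rfl⟩ := Nat.exists_eq_add_of_le hdv
  have hk : 2 + k - 2 = k := by omega
  rw [hk]
  have hx : S.card * (2 + k) = 2 * S.card + S.card * k := by ring
  rw [hx] at hfin hbound
  generalize S.card * k = p at hfin hbound ⊢
  omega
end
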